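/- arXiv:1810.01397 — 2 statements merged into one kernel-verified Lean document; each statement's English description precedes it below -/
import Mathlib

section
/- Let B : [0,T] × Ω → ℝ³ be continuously differentiable in time and space, u : [0,T] × Ω → ℝ³ continuous with bounded continuous spatial derivatives, B(0,·) = B⁰, B^b continuous boundary data, and assume ∂_t B_i = B_j ∂_j u_i − (1/2) B_i ∂_j u_j − (1/2) u_j ∂_j B_i − (1/2) ∂_j(u_j B_i) on Ω and B(t,x) = B^b(t,x) at every x ∈ ∂Ω with u(t,x)·ν(x) < 0. Then for all t ∈ [0,T]: ∫_Ω |B(t)|² ≤ exp(9 ‖∇u‖_∞ t) ( ∫_Ω |B⁰|² + ∫_0^t ‖u(s)‖_{L∞(∂Ω)} ∫_{∂Ω} |B^b(s)|² ds ), where ‖∇u‖_∞ = max_{i,j} sup_{(s,x)∈[0,T]×Ω} |∂_j u_i(s,x)| and ‖u(s)‖_{L∞(∂Ω)} = max_j sup_{x∈∂Ω} |u_j(s,x)|. -/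
open MeasureTheory

/-- Partial derivative in the `j`-th spatial coordinate direction. -/
noncomputable def pd (f : (Fin 3 → ℝ) → ℝ) (j : Fin 3) (x : Fin 3 → ℝ) : ℝ :=
  fderiv ℝ f x (Pi.single j 1)

/-- Two-dimensional integral over the face of the box `[a,b] ⊆ ℝ³` obtained by freezing
the `j`-th coordinate at the value `c`. -/
noncomputable def faceIntegral (a b : Fin 3 → ℝ) (j : Fin 3) (c : ℝ)
    (f : (Fin 3 → ℝ) → ℝ) : ℝ :=
  ∫ y in Set.Icc (fun i => a (j.succAbove i)) (fun i => b (j.succAbove i)),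
    f (Fin.insertNth (α := fun _ => ℝ) j c y)

/-- Integral over the boundary of the box `[a,b] ⊆ ℝ³` (sum over the six faces). -/
noncomputable def bdryIntegral (a b : Fin 3 → ℝ)
    (g : (Fin 3 → ℝ) → (Fin 3 → ℝ) → ℝ) : ℝ :=
  ∑ j, (faceIntegral a b j (b j) (fun x => g x (Pi.single j 1))
      + faceIntegral a b j (a j) (fun x => g x (Pi.single j (-1))))

/-- The boundary of the box `[a,b] ⊆ ℝ³`. -/
def bdrySet (a b : Fin 3 → ℝ) : Set (Fin 3 → ℝ) :=
  Set.Icc a b \ Set.pi Set.univ (fun i => Set.Ioo (a i) (b i))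

/-- `max_{i,j} sup_{(s,x) ∈ [0,T]×[a,b]} |∂_j u_i(s,x)|`. -/
noncomputable def gradSupTime (T : ℝ) (a b : Fin 3 → ℝ)
    (u : ℝ → (Fin 3 → ℝ) → Fin 3 → ℝ) : ℝ :=
  ⨆ i : Fin 3, ⨆ j : Fin 3,
    ⨆ p : (Set.Icc (0:ℝ) T ×ˢ Set.Icc a b : Set (ℝ × (Fin 3 → ℝ))),
      |pd (fun y => u (↑p : ℝ × (Fin 3 → ℝ)).1 y i) j (↑p : ℝ × (Fin 3 → ℝ)).2|

/-- `max_j sup_{x ∈ ∂[a,b]} |v_j(x)|`. -/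
noncomputable def bdrySup (a b : Fin 3 → ℝ) (v : (Fin 3 → ℝ) → Fin 3 → ℝ) : ℝ :=
  ⨆ j : Fin 3, ⨆ x : bdrySet a b, |v x j|





/-- continuity of a parametric integral over a compact set. -/
lemma contParam {n : ℕ} {f : ℝ → (Fin n → ℝ) → ℝ}
    (hf : Continuous fun p : ℝ × (Fin n → ℝ) => f p.1 p.2)
    {s : Set (Fin n → ℝ)} (hs : IsCompact s) :
    Continuous fun t => ∫ x in s, f t x := by
  rw [continuous_iff_continuousAt]
  intro t₀
  obtain ⟨C, hC⟩ := (isCompact_closedBall t₀ 1 |>.prod hs).exists_bound_of_continuousOn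
    hf.continuousOn
  apply continuousAt_of_dominated (bound := fun _ => C)
  · exact Filter.Eventually.of_forall fun t =>
      ((hf.comp (Continuous.prodMk_right t)).aestronglyMeasurable).restrict
  · filter_upwards [Metric.closedBall_mem_nhds t₀ one_pos] with t ht
    filter_upwards [ae_restrict_mem hs.measurableSet] with x hx
    exact hC (t, x) ⟨ht, hx⟩
  · exact integrableOn_const hs.measure_lt_top.ne
  · exact Filter.Eventually.of_forall fun x =>
      (hf.comp (continuous_id.prodMk continuous_const)).continuousAt

lemma ciSup_le_ciSup_add {ι : Sort*} [Nonempty ι] {f g : ι → ℝ} {ε : ℝ}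
    (hg : BddAbove (Set.range g)) (h : ∀ i, f i ≤ g i + ε) : (⨆ i, f i) ≤ (⨆ i, g i) + ε :=
  ciSup_le fun i => (h i).trans (add_le_add_left (le_ciSup hg i) ε)

lemma isCompact_bdrySet (a b : Fin 3 → ℝ) : IsCompact (bdrySet a b) :=
  isCompact_Icc.of_isClosed_subset
    (isClosed_Icc.sdiff (isOpen_set_pi Set.finite_univ fun _ _ => isOpen_Ioo))
    Set.diff_subset

lemma mem_bdrySet_left {a b : Fin 3 → ℝ} (hab : a ≤ b) : a ∈ bdrySet a b :=
  ⟨Set.left_mem_Icc.2 hab, fun h => (h 0 trivial).1.false⟩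

lemma nonempty_bdrySet (a b : Fin 3 → ℝ) (hab : a ≤ b) : (bdrySet a b).Nonempty :=
  ⟨a, mem_bdrySet_left hab⟩

lemma bddAbove_inner {K : Set (Fin 3 → ℝ)} (hK : IsCompact K) {f : (Fin 3 → ℝ) → ℝ}
    (hf : Continuous f) : BddAbove (Set.range fun x : K => |f x|) := by
  haveI : CompactSpace K := isCompact_iff_compactSpace.mp hK
  exact (isCompact_range ((hf.abs).comp continuous_subtype_val)).bddAbove

lemma continuous_bdrySupComp (a b : Fin 3 → ℝ) (hab : a ≤ b)
    (u : ℝ → (Fin 3 → ℝ) → Fin 3 → ℝ)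
    (hucont : ∀ i, Continuous (fun p : ℝ × (Fin 3 → ℝ) => u p.1 p.2 i)) :
    Continuous fun s => bdrySup a b (u s) := by
  haveI : Nonempty (bdrySet a b) := (nonempty_bdrySet a b hab).to_subtype
  rw [continuous_iff_continuousAt]
  intro s₀
  rw [Metric.continuousAt_iff]
  intro ε hε
  have hev : ∀ᶠ s in nhds s₀, ∀ x ∈ bdrySet a b, ∀ j, |u s x j - u s₀ x j| < ε / 2 := by
    apply (isCompact_bdrySet a b).eventually_forall_of_forall_eventually
    intro y hy
    have hc : ∀ j : Fin 3, Continuous fun z : ℝ × (Fin 3 → ℝ) => |u z.1 z.2 j - u s₀ z.2 j| :=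
      fun j => ((hucont j).sub ((hucont j).comp
        (continuous_const.prodMk continuous_snd))).abs
    refine Filter.eventually_all.2 fun j => ?_
    have : (s₀, y) ∈ {z : ℝ × (Fin 3 → ℝ) | |u z.1 z.2 j - u s₀ z.2 j| < ε / 2} := by
      simp [abs_of_nonneg, half_pos hε]
    exact (isOpen_lt (hc j) continuous_const).mem_nhds this
  rw [Metric.eventually_nhds_iff] at hev
  obtain ⟨δ, hδ, hkey⟩ := hev
  refine ⟨δ, hδ, fun {s} hs => ?_⟩
  have key := hkey hs
  have h1 : bdrySup a b (u s) ≤ bdrySup a b (u s₀) + ε / 2 := by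
    refine ciSup_le_ciSup_add ((Set.finite_range _).bddAbove) fun j => ?_
    refine ciSup_le_ciSup_add (bddAbove_inner (isCompact_bdrySet a b)
      ((hucont j).comp (continuous_const.prodMk continuous_id))) fun x => ?_
    have h3 := key x.1 x.2 j
    have := abs_sub_abs_le_abs_sub (u s x.1 j) (u s₀ x.1 j)
    linarith
  have h2 : bdrySup a b (u s₀) ≤ bdrySup a b (u s) + ε / 2 := by
    refine ciSup_le_ciSup_add ((Set.finite_range _).bddAbove) fun j => ?_
    refine ciSup_le_ciSup_add (bddAbove_inner (isCompact_bdrySet a b)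
      ((hucont j).comp (continuous_const.prodMk continuous_id))) fun x => ?_
    have h3 := key x.1 x.2 j
    have := abs_sub_abs_le_abs_sub (u s₀ x.1 j) (u s x.1 j)
    rw [abs_sub_comm] at this
    linarith
  rw [Real.dist_eq]
  have : |bdrySup a b (u s) - bdrySup a b (u s₀)| ≤ ε / 2 :=
    abs_le.2 ⟨by linarith, by linarith⟩
  linarith

section grad
variable {T : ℝ} {a b : Fin 3 → ℝ} {u : ℝ → (Fin 3 → ℝ) → Fin 3 → ℝ}

lemma gradSupTime_bound (hT : 0 ≤ T) (hab : a ≤ b)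
    (hu'bdd : ∃ C : ℝ, ∀ t x i j, |pd (fun y => u t y i) j x| ≤ C) :
    (0 ≤ gradSupTime T a b u) ∧
      ∀ t ∈ Set.Icc (0:ℝ) T, ∀ x ∈ Set.Icc a b, ∀ i j,
        |pd (fun y => u t y i) j x| ≤ gradSupTime T a b u := by
  obtain ⟨C, hC⟩ := hu'bdd
  have hne : ((0:ℝ), a) ∈ (Set.Icc (0:ℝ) T ×ˢ Set.Icc a b : Set (ℝ × (Fin 3 → ℝ))) :=
    ⟨Set.left_mem_Icc.2 hT, Set.left_mem_Icc.2 hab⟩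
  haveI : Nonempty (Set.Icc (0:ℝ) T ×ˢ Set.Icc a b : Set (ℝ × (Fin 3 → ℝ))) := ⟨⟨_, hne⟩⟩
  have hbddin : ∀ i j : Fin 3, BddAbove (Set.range fun
      p : (Set.Icc (0:ℝ) T ×ˢ Set.Icc a b : Set (ℝ × (Fin 3 → ℝ))) =>
      |pd (fun y => u (↑p : ℝ × (Fin 3 → ℝ)).1 y i) j (↑p : ℝ × (Fin 3 → ℝ)).2|) := by
    intro i j
    exact ⟨C, by rintro z ⟨p, rfl⟩; exact hC _ _ i j⟩
  have key : ∀ t ∈ Set.Icc (0:ℝ) T, ∀ x ∈ Set.Icc a b, ∀ i j,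
      |pd (fun y => u t y i) j x| ≤ gradSupTime T a b u := by
    intro t ht x hx i j
    have h1 : |pd (fun y => u t y i) j x|
        ≤ ⨆ p : (Set.Icc (0:ℝ) T ×ˢ Set.Icc a b : Set (ℝ × (Fin 3 → ℝ))),
          |pd (fun y => u (↑p : ℝ × (Fin 3 → ℝ)).1 y i) j (↑p : ℝ × (Fin 3 → ℝ)).2| :=
      le_ciSup (hbddin i j) ⟨(t, x), ⟨ht, hx⟩⟩
    have h2 := le_ciSup (f := fun j : Fin 3 =>
        ⨆ p : (Set.Icc (0:ℝ) T ×ˢ Set.Icc a b : Set (ℝ × (Fin 3 → ℝ))),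
          |pd (fun y => u (↑p : ℝ × (Fin 3 → ℝ)).1 y i) j (↑p : ℝ × (Fin 3 → ℝ)).2|)
        ((Set.finite_range _).bddAbove) j
    have h3 := le_ciSup (f := fun i : Fin 3 => ⨆ j : Fin 3,
        ⨆ p : (Set.Icc (0:ℝ) T ×ˢ Set.Icc a b : Set (ℝ × (Fin 3 → ℝ))),
          |pd (fun y => u (↑p : ℝ × (Fin 3 → ℝ)).1 y i) j (↑p : ℝ × (Fin 3 → ℝ)).2|)
        ((Set.finite_range _).bddAbove) i
    exact h1.trans (h2.trans h3)
  exact ⟨(abs_nonneg _).trans (key 0 (Set.left_mem_Icc.2 hT) a (Set.left_mem_Icc.2 hab) 0 0), key⟩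

lemma bdrySup_bound (hab : a ≤ b) (v : (Fin 3 → ℝ) → Fin 3 → ℝ)
    (hv : ∀ j, Continuous fun x => v x j) :
    (0 ≤ bdrySup a b v) ∧ ∀ x ∈ bdrySet a b, ∀ j, |v x j| ≤ bdrySup a b v := by
  haveI : Nonempty (bdrySet a b) := (nonempty_bdrySet a b hab).to_subtype
  have key : ∀ x ∈ bdrySet a b, ∀ j, |v x j| ≤ bdrySup a b v := by
    intro x hx j
    have h1 : |v x j| ≤ ⨆ x : bdrySet a b, |v x j| :=
      le_ciSup (bddAbove_inner (isCompact_bdrySet a b) (hv j)) ⟨x, hx⟩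
    exact h1.trans (le_ciSup (f := fun j : Fin 3 => ⨆ x : bdrySet a b, |v x j|)
      ((Set.finite_range _).bddAbove) j)
  exact ⟨(abs_nonneg _).trans (key a (mem_bdrySet_left hab) 0), key⟩

end grad

section calc1
variable {F : ℝ × (Fin 3 → ℝ) → ℝ}

/-- time derivative of a jointly C¹ function. -/
lemma hasDerivAt_time (hF : ContDiff ℝ 1 F) (t : ℝ) (x : Fin 3 → ℝ) :
    HasDerivAt (fun s => F (s, x)) (fderiv ℝ F (t, x) (1, 0)) t := by
  have h1 : HasDerivAt (fun s : ℝ => (s, x)) ((1 : ℝ), (0 : Fin 3 → ℝ)) t :=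
    (hasDerivAt_id t).prodMk (hasDerivAt_const t x)
  exact ((hF.differentiable one_ne_zero (t, x)).hasFDerivAt).comp_hasDerivAt t h1

lemma continuous_fderiv_apply (hF : ContDiff ℝ 1 F) (v : ℝ × (Fin 3 → ℝ)) :
    Continuous fun p => fderiv ℝ F p v :=
  (hF.continuous_fderiv one_ne_zero).clm_apply continuous_const

/-- spatial pd of a jointly C¹ function, as applied fderiv. -/
lemma pd_eq_fderiv_joint (hF : ContDiff ℝ 1 F) (t : ℝ) (x : Fin 3 → ℝ) (j : Fin 3) :
    pd (fun y => F (t, y)) j x = fderiv ℝ F (t, x) (0, Pi.single j 1) := by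
  have h1 : HasFDerivAt (fun y : Fin 3 → ℝ => (t, y))
      (ContinuousLinearMap.inr ℝ ℝ (Fin 3 → ℝ)) x := hasFDerivAt_prodMk_right t x
  have h2 : HasFDerivAt (fun y => F (t, y))
      ((fderiv ℝ F (t, x)).comp (ContinuousLinearMap.inr ℝ ℝ (Fin 3 → ℝ))) x :=
    ((hF.differentiable one_ne_zero (t, x)).hasFDerivAt).comp x h1
  rw [pd, h2.fderiv]
  rfl

lemma contDiff_space (hF : ContDiff ℝ 1 F) (t : ℝ) :
    ContDiff ℝ 1 (fun x : Fin 3 → ℝ => F (t, x)) :=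
  hF.comp (contDiff_const.prodMk contDiff_id)

end calc1

/-- product rule for pd. -/
lemma pd_mul {f g : (Fin 3 → ℝ) → ℝ} {x : Fin 3 → ℝ} (hf : DifferentiableAt ℝ f x)
    (hg : DifferentiableAt ℝ g x) (j : Fin 3) :
    pd (fun y => f y * g y) j x = pd f j x * g x + f x * pd g j x := by
  rw [pd, fderiv_fun_mul hf hg]
  simp only [ContinuousLinearMap.add_apply, ContinuousLinearMap.smul_apply, smul_eq_mul, pd]
  ring

/-- sum rule for pd. -/
lemma pd_sum {f : Fin 3 → (Fin 3 → ℝ) → ℝ} {x : Fin 3 → ℝ}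
    (hf : ∀ i, DifferentiableAt ℝ (f i) x) (j : Fin 3) :
    pd (fun y => ∑ i, f i y) j x = ∑ i, pd (f i) j x := by
  rw [pd, fderiv_fun_sum (fun i _ => hf i)]
  simp [pd]

/-- the quadratic pointwise bound. -/
lemma quad_bound (m : ℝ) (hm : 0 ≤ m) (c : Fin 3 → ℝ) (U : Fin 3 → Fin 3 → ℝ)
    (hU : ∀ i j, |U i j| ≤ m) :
    2 * (∑ i, ∑ j, c i * c j * U i j) - (∑ i, c i * c i) * (∑ j, U j j)
      ≤ 9 * m * (∑ i, c i * c i) := by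
  have key : ∀ i j, c i * c j * U i j ≤ m * (c i ^ 2 + c j ^ 2) / 2 := by
    intro i j
    have h1 : c i * c j * U i j ≤ |c i * c j| * m := by
      calc c i * c j * U i j ≤ |c i * c j * U i j| := le_abs_self _
        _ = |c i * c j| * |U i j| := abs_mul _ _
        _ ≤ |c i * c j| * m := by
            exact mul_le_mul_of_nonneg_left (hU i j) (abs_nonneg _)
    have h2 : |c i * c j| ≤ (c i ^ 2 + c j ^ 2) / 2 := by
      rw [abs_mul]
      nlinarith [sq_nonneg (|c i| - |c j|), sq_abs (c i), sq_abs (c j), abs_nonneg (c i),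
        abs_nonneg (c j)]
    nlinarith [abs_nonneg (c i * c j)]
  have hd : ∀ j, -m ≤ U j j := fun j => neg_le_of_abs_le (hU j j)
  have hq : 0 ≤ ∑ i, c i * c i := Finset.sum_nonneg fun i _ => mul_self_nonneg _
  simp only [Fin.sum_univ_three] at *
  nlinarith [key 0 0, key 0 1, key 0 2, key 1 0, key 1 1, key 1 2, key 2 0, key 2 1, key 2 2,
    hd 0, hd 1, hd 2, mul_self_nonneg (c 0), mul_self_nonneg (c 1), mul_self_nonneg (c 2)]

lemma divergence_box (a b : Fin 3 → ℝ) (hab : a ≤ b) (f : Fin 3 → (Fin 3 → ℝ) → ℝ)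
    (hf : ∀ j, ContDiff ℝ 1 (f j)) :
    ∫ x in Set.Icc a b, ∑ j, pd (f j) j x
      = ∑ j, (faceIntegral a b j (b j) (f j) - faceIntegral a b j (a j) (f j)) := by
  have H := MeasureTheory.integral_divergence_of_hasFDerivAt_off_countable' a b hab f
    (fun j x => fderiv ℝ (f j) x) ∅ Set.countable_empty
    (fun j => (hf j).continuous.continuousOn)
    (fun x _ j => ((hf j).differentiable one_ne_zero x).hasFDerivAt)
    (by
      have hc : Continuous fun x => ∑ j : Fin 3, fderiv ℝ (f j) x (Pi.single j 1) :=
        continuous_finset_sum _ fun j _ =>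
          ((hf j).continuous_fderiv one_ne_zero).clm_apply continuous_const
      exact hc.continuousOn.integrableOn_compact isCompact_Icc)
  exact H


/-- Energy estimate for the split form of the linear induction equation with strongly
imposed inflow boundary data:
`∫_Ω |B(t)|² ≤ exp(9‖∇u‖_∞ t) (∫_Ω |B⁰|² + ∫_0^t ‖u(s)‖_{L∞(∂Ω)} ∫_{∂Ω} |B^b(s)|² ds)`. -/
theorem energy_estimate_transport_strong (T : ℝ) (hT : 0 ≤ T) (a b : Fin 3 → ℝ)
    (hab : ∀ i, a i < b i)
    (B u Bb : ℝ → (Fin 3 → ℝ) → Fin 3 → ℝ) (B0 : (Fin 3 → ℝ) → Fin 3 → ℝ)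
    (hB : ∀ i, ContDiff ℝ 1 (fun p : ℝ × (Fin 3 → ℝ) => B p.1 p.2 i))
    (hucont : ∀ i, Continuous (fun p : ℝ × (Fin 3 → ℝ) => u p.1 p.2 i))
    (hudiff : ∀ t, ∀ i, ContDiff ℝ 1 (fun x => u t x i))
    (hu'cont : ∀ i j, Continuous (fun p : ℝ × (Fin 3 → ℝ) => pd (fun y => u p.1 y i) j p.2))
    (hu'bdd : ∃ C : ℝ, ∀ t x i j, |pd (fun y => u t y i) j x| ≤ C)
    (hBbcont : ∀ i, Continuous (fun p : ℝ × (Fin 3 → ℝ) => Bb p.1 p.2 i))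
    (hB0 : ∀ x, ∀ i, B 0 x i = B0 x i)
    (hpde : ∀ t ∈ Set.Icc (0:ℝ) T, ∀ x ∈ Set.Icc a b, ∀ i,
      deriv (fun s => B s x i) t
        = (∑ j, B t x j * pd (fun y => u t y i) j x)
          - (1/2) * B t x i * (∑ j, pd (fun y => u t y j) j x)
          - (1/2) * (∑ j, u t x j * pd (fun y => B t y i) j x)
          - (1/2) * (∑ j, pd (fun y => u t y j * B t y i) j x))
    (hbc : ∀ t ∈ Set.Icc (0:ℝ) T, ∀ x ∈ Set.Icc a b, ∀ j : Fin 3,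
      (x j = b j → u t x j < 0 → ∀ i, B t x i = Bb t x i) ∧
      (x j = a j → 0 < u t x j → ∀ i, B t x i = Bb t x i)) :
    ∀ t ∈ Set.Icc (0:ℝ) T,
      (∫ x in Set.Icc a b, ∑ i, B t x i * B t x i)
        ≤ Real.exp (9 * gradSupTime T a b u * t)
          * ((∫ x in Set.Icc a b, ∑ i, B0 x i * B0 x i)
            + ∫ s in (0:ℝ)..t,
                bdrySup a b (u s)
                  * bdryIntegral a b (fun x _ => ∑ i, Bb s x i * Bb s x i)) := by
  have hab' : a ≤ b := fun i => (hab i).le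
  obtain ⟨hM0, hMb⟩ := gradSupTime_bound hT hab' hu'bdd
  set M := gradSupTime T a b u with hMdef
  -- time derivative of B
  set DtB : ℝ → (Fin 3 → ℝ) → Fin 3 → ℝ := fun s x i =>
    fderiv ℝ (fun p : ℝ × (Fin 3 → ℝ) => B p.1 p.2 i) (s, x) ((1 : ℝ), (0 : Fin 3 → ℝ))
    with hDtBdef
  have hBt : ∀ s x i, HasDerivAt (fun r => B r x i) (DtB s x i) s := fun s x i =>
    hasDerivAt_time (hB i) s x
  have hBtc : ∀ i, Continuous fun p : ℝ × (Fin 3 → ℝ) => DtB p.1 p.2 i := fun i =>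
    continuous_fderiv_apply (hB i) _
  have hBc : ∀ i, Continuous fun p : ℝ × (Fin 3 → ℝ) => B p.1 p.2 i := fun i =>
    (hB i).continuous
  have hBxc : ∀ s i, ContDiff ℝ 1 fun x => B s x i := fun s i => contDiff_space (hB i) s
  -- the energy density and its time derivative
  set Q : ℝ → (Fin 3 → ℝ) → ℝ := fun s x => ∑ i, B s x i * B s x i with hQdef
  set Qt : ℝ → (Fin 3 → ℝ) → ℝ := fun s x =>
    ∑ i, (DtB s x i * B s x i + B s x i * DtB s x i) with hQtdef
  have hQder : ∀ s x, HasDerivAt (fun r => Q r x) (Qt s x) s := fun s x =>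
    HasDerivAt.fun_sum fun i _ => (hBt s x i).mul (hBt s x i)
  have hQc : Continuous fun p : ℝ × (Fin 3 → ℝ) => Q p.1 p.2 :=
    continuous_finset_sum _ fun i _ => (hBc i).mul (hBc i)
  have hQtc : Continuous fun p : ℝ × (Fin 3 → ℝ) => Qt p.1 p.2 :=
    continuous_finset_sum _ fun i _ => ((hBtc i).mul (hBc i)).add ((hBc i).mul (hBtc i))
  -- the energy and its derivative
  set E : ℝ → ℝ := fun s => ∫ x in Set.Icc a b, Q s x with hEdef
  set E' : ℝ → ℝ := fun s => ∫ x in Set.Icc a b, Qt s x with hE'def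
  have hEder : ∀ s, HasDerivAt E (E' s) s := by
    intro s₀
    obtain ⟨C, hC⟩ := ((isCompact_closedBall s₀ 1).prod (isCompact_Icc (a := a) (b := b))).exists_bound_of_continuousOn
      hQtc.continuousOn
    refine (hasDerivAt_integral_of_dominated_loc_of_deriv_le
      (μ := volume.restrict (Set.Icc a b)) (F := fun s x => Q s x) (F' := fun s x => Qt s x)
      (bound := fun _ => C) (Metric.ball_mem_nhds s₀ one_pos)
      (Filter.Eventually.of_forall fun s =>
        ((hQc.comp (Continuous.prodMk_right s)).aestronglyMeasurable).restrict)
      ((hQc.comp (Continuous.prodMk_right s₀)).continuousOn.integrableOn_compact isCompact_Icc)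
      ((hQtc.comp (Continuous.prodMk_right s₀)).aestronglyMeasurable).restrict
      ?_ (integrableOn_const isCompact_Icc.measure_lt_top.ne)
      (Filter.Eventually.of_forall fun x s _ => hQder s x)).2
    filter_upwards [ae_restrict_mem measurableSet_Icc] with x hx
    intro s hs
    exact hC (s, x) ⟨Metric.ball_subset_closedBall hs, hx⟩
  have hE'c : Continuous E' := contParam hQtc isCompact_Icc
  -- split of the time derivative density into a bulk term and a divergence term
  set V : ℝ → (Fin 3 → ℝ) → ℝ := fun s x =>
    2 * (∑ i, ∑ j, B s x i * B s x j * pd (fun y => u s y i) j x)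
      - Q s x * (∑ j, pd (fun y => u s y j) j x) with hVdef
  set Dv : ℝ → (Fin 3 → ℝ) → ℝ := fun s x =>
    ∑ j, pd (fun y => u s y j * Q s y) j x with hDvdef
  have hsplit : ∀ s ∈ Set.Icc (0:ℝ) T, ∀ x ∈ Set.Icc a b, Qt s x = V s x - Dv s x := by
    intro s hs x hx
    have hBd : ∀ i, DifferentiableAt ℝ (fun y => B s y i) x := fun i =>
      (hBxc s i).differentiable one_ne_zero x
    have hud : ∀ j, DifferentiableAt ℝ (fun y => u s y j) x := fun j =>
      (hudiff s j).differentiable one_ne_zero x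
    have hDt : ∀ i, DtB s x i
        = (∑ j, B s x j * pd (fun y => u s y i) j x)
          - (1/2) * B s x i * (∑ j, pd (fun y => u s y j) j x)
          - (1/2) * (∑ j, u s x j * pd (fun y => B s y i) j x)
          - (1/2) * (∑ j, pd (fun y => u s y j * B s y i) j x) := fun i =>
      ((hBt s x i).deriv).symm.trans (hpde s hs x hx i)
    have hprod : ∀ i j, pd (fun y => u s y j * B s y i) j x
        = pd (fun y => u s y j) j x * B s x i + u s x j * pd (fun y => B s y i) j x :=
      fun i j => pd_mul (hud j) (hBd i) j
    have hpdQ : ∀ j, pd (fun y => u s y j * Q s y) j x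
        = pd (fun y => u s y j) j x * Q s x
          + u s x j * (∑ i, (pd (fun y => B s y i) j x * B s x i
              + B s x i * pd (fun y => B s y i) j x)) := by
      intro j
      have hQd : DifferentiableAt ℝ (fun y => Q s y) x := by
        exact DifferentiableAt.fun_sum fun i _ => (hBd i).mul (hBd i)
      rw [pd_mul (hud j) hQd]
      congr 1
      rw [show (fun y => Q s y) = fun y => ∑ i, B s y i * B s y i from rfl,
        pd_sum (f := fun i y => B s y i * B s y i) (fun i => (hBd i).mul (hBd i)) j]
      congr 1
      exact Finset.sum_congr rfl fun i _ => pd_mul (hBd i) (hBd i) j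
    have hQx : Q s x = ∑ i, B s x i * B s x i := rfl
    have hQtx : Qt s x = ∑ i, (DtB s x i * B s x i + B s x i * DtB s x i) := rfl
    have hVx : V s x = 2 * (∑ i, ∑ j, B s x i * B s x j * pd (fun y => u s y i) j x)
      - Q s x * (∑ j, pd (fun y => u s y j) j x) := rfl
    have hDvx : Dv s x = ∑ j, pd (fun y => u s y j * Q s y) j x := rfl
    rw [hQtx, hVx, hDvx]
    simp only [hDt, hprod, hpdQ, hQx]
    simp only [Fin.sum_univ_three]
    ring
  -- continuity facts at fixed time
  have hins : ∀ (j : Fin 3) (c : ℝ),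
      Continuous fun y : Fin 2 → ℝ => Fin.insertNth (α := fun _ => ℝ) j c y := fun j c =>
    (continuous_const : Continuous fun _ : Fin 2 → ℝ => c).finInsertNth j continuous_id
  have hQsc : ∀ s, Continuous fun x => Q s x := fun s =>
    hQc.comp (Continuous.prodMk_right s)
  have husc : ∀ s j, Continuous fun x => u s x j := fun s j =>
    (hucont j).comp (Continuous.prodMk_right s)
  have hfC1 : ∀ s (j : Fin 3), ContDiff ℝ 1 (fun x => u s x j * Q s x) := by
    intro s j
    exact (hudiff s j).mul (ContDiff.sum fun i _ => (hBxc s i).mul (hBxc s i))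
  have hDvc : ∀ s, Continuous fun x => Dv s x := by
    intro s
    refine continuous_finset_sum _ fun j _ => ?_
    exact (((hfC1 s j).continuous_fderiv one_ne_zero).clm_apply continuous_const : _)
  have hVc : ∀ s, Continuous fun x => V s x := by
    intro s
    refine Continuous.sub (continuous_const.mul ?_) ((hQsc s).mul ?_)
    · refine continuous_finset_sum _ fun i _ => continuous_finset_sum _ fun j _ => ?_
      exact (((hBc i).comp (Continuous.prodMk_right s)).mul
        ((hBc j).comp (Continuous.prodMk_right s))).mul
        ((hu'cont i j).comp (Continuous.prodMk_right s))
    · exact continuous_finset_sum _ fun j _ =>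
        (hu'cont j j).comp (Continuous.prodMk_right s)
  -- divergence theorem
  have hdiv : ∀ s, (∫ x in Set.Icc a b, Dv s x)
      = ∑ j, (faceIntegral a b j (b j) (fun x => u s x j * Q s x)
        - faceIntegral a b j (a j) (fun x => u s x j * Q s x)) := fun s =>
    divergence_box a b hab' _ (hfC1 s)
  -- pointwise nonnegativity
  have hQnn : ∀ s x, 0 ≤ Q s x := fun s x => Finset.sum_nonneg fun i _ => mul_self_nonneg _
  have hQbnn : ∀ s (x : Fin 3 → ℝ), (0:ℝ) ≤ ∑ i, Bb s x i * Bb s x i := fun s x =>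
    Finset.sum_nonneg fun i _ => mul_self_nonneg _
  have hSb : ∀ s, 0 ≤ bdrySup a b (u s) ∧
      ∀ x ∈ bdrySet a b, ∀ j, |u s x j| ≤ bdrySup a b (u s) := fun s =>
    bdrySup_bound hab' (u s) (fun j => husc s j)
  -- face estimates
  have hface_b : ∀ s ∈ Set.Icc (0:ℝ) T, ∀ j : Fin 3,
      -(bdrySup a b (u s)) * faceIntegral a b j (b j) (fun x => ∑ i, Bb s x i * Bb s x i)
        ≤ faceIntegral a b j (b j) (fun x => u s x j * Q s x) := by
    intro s hs j
    rw [faceIntegral, faceIntegral, ← MeasureTheory.integral_const_mul]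
    refine setIntegral_mono_on ?_ ?_ measurableSet_Icc ?_
    · exact ((continuous_const.mul ((continuous_finset_sum _ fun i _ =>
        (((hBbcont i).comp (Continuous.prodMk_right s)).mul
          ((hBbcont i).comp (Continuous.prodMk_right s)))).comp
        (hins j (b j)))).continuousOn).integrableOn_compact isCompact_Icc
    · exact ((((husc s j).mul (hQsc s)).comp (hins j (b j))).continuousOn).integrableOn_compact
        isCompact_Icc
    · intro y hy
      set X := Fin.insertNth (α := fun _ => ℝ) j (b j) y with hXdef
      have hXΩ : X ∈ Set.Icc a b :=
        Fin.insertNth_mem_Icc.2 ⟨⟨(hab j).le, le_rfl⟩, hy⟩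
      have hXj : X j = b j := by rw [hXdef]; exact Fin.insertNth_apply_same (α := fun _ => ℝ) j (b j) y
      have hXbd : X ∈ bdrySet a b :=
        ⟨hXΩ, fun h => absurd (h j trivial).2 (by rw [hXj]; exact lt_irrefl _)⟩
      have hub := (hSb s).2 X hXbd j
      by_cases hu : u s X j < 0
      · have hQQb : Q s X = ∑ i, Bb s X i * Bb s X i :=
          Finset.sum_congr rfl fun i _ => by
            rw [(hbc s hs X hXΩ j).1 hXj hu i]
        rw [← hQQb]
        refine mul_le_mul_of_nonneg_right ?_ (hQnn s X)
        have := neg_abs_le (u s X j)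
        linarith
      · push_neg at hu
        refine le_trans (mul_nonpos_of_nonpos_of_nonneg ?_ (hQbnn s X))
          (mul_nonneg hu (hQnn s X))
        linarith [(hSb s).1]
  have hface_a : ∀ s ∈ Set.Icc (0:ℝ) T, ∀ j : Fin 3,
      faceIntegral a b j (a j) (fun x => u s x j * Q s x)
        ≤ bdrySup a b (u s) * faceIntegral a b j (a j) (fun x => ∑ i, Bb s x i * Bb s x i) := by
    intro s hs j
    rw [faceIntegral, faceIntegral, ← MeasureTheory.integral_const_mul]
    refine setIntegral_mono_on ?_ ?_ measurableSet_Icc ?_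
    · exact ((((husc s j).mul (hQsc s)).comp (hins j (a j))).continuousOn).integrableOn_compact
        isCompact_Icc
    · exact ((continuous_const.mul ((continuous_finset_sum _ fun i _ =>
        (((hBbcont i).comp (Continuous.prodMk_right s)).mul
          ((hBbcont i).comp (Continuous.prodMk_right s)))).comp
        (hins j (a j)))).continuousOn).integrableOn_compact isCompact_Icc
    · intro y hy
      set X := Fin.insertNth (α := fun _ => ℝ) j (a j) y with hXdef
      have hXΩ : X ∈ Set.Icc a b :=
        Fin.insertNth_mem_Icc.2 ⟨⟨le_rfl, (hab j).le⟩, hy⟩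
      have hXj : X j = a j := by rw [hXdef]; exact Fin.insertNth_apply_same (α := fun _ => ℝ) j (a j) y
      have hXbd : X ∈ bdrySet a b :=
        ⟨hXΩ, fun h => absurd (h j trivial).1 (by rw [hXj]; exact lt_irrefl _)⟩
      have hub := (hSb s).2 X hXbd j
      by_cases hu : 0 < u s X j
      · have hQQb : Q s X = ∑ i, Bb s X i * Bb s X i :=
          Finset.sum_congr rfl fun i _ => by
            rw [(hbc s hs X hXΩ j).2 hXj hu i]
        rw [← hQQb]
        refine mul_le_mul_of_nonneg_right ?_ (hQnn s X)
        have := le_abs_self (u s X j)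
        linarith
      · push_neg at hu
        refine le_trans (mul_nonpos_of_nonpos_of_nonneg hu (hQnn s X))
          (mul_nonneg (hSb s).1 (hQbnn s X))
  -- the forcing term
  set g : ℝ → ℝ := fun s => bdrySup a b (u s)
      * bdryIntegral a b (fun x _ => ∑ i, Bb s x i * Bb s x i) with hgdef
  have hbdryI : ∀ s, bdryIntegral a b (fun x _ => ∑ i, Bb s x i * Bb s x i)
      = ∑ j, (faceIntegral a b j (b j) (fun x => ∑ i, Bb s x i * Bb s x i)
        + faceIntegral a b j (a j) (fun x => ∑ i, Bb s x i * Bb s x i)) := fun s => rfl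
  -- differential inequality
  have hE'le : ∀ s ∈ Set.Icc (0:ℝ) T, E' s ≤ 9 * M * E s + g s := by
    intro s hs
    have h1 : E' s = (∫ x in Set.Icc a b, V s x) - ∫ x in Set.Icc a b, Dv s x := by
      have e1 : E' s = ∫ x in Set.Icc a b, Qt s x := rfl
      rw [e1, setIntegral_congr_fun (μ := volume) measurableSet_Icc
        (fun x hx => hsplit s hs x hx)]
      exact integral_sub ((hVc s).continuousOn.integrableOn_compact isCompact_Icc)
        ((hDvc s).continuousOn.integrableOn_compact isCompact_Icc)
    have h2 : (∫ x in Set.Icc a b, V s x) ≤ 9 * M * E s := by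
      have h3 : (∫ x in Set.Icc a b, V s x) ≤ ∫ x in Set.Icc a b, 9 * M * Q s x := by
        refine setIntegral_mono_on ((hVc s).continuousOn.integrableOn_compact isCompact_Icc)
          ((continuous_const.mul (hQsc s)).continuousOn.integrableOn_compact isCompact_Icc)
          measurableSet_Icc ?_
        intro x hx
        exact quad_bound M hM0 (fun i => B s x i) (fun i j => pd (fun y => u s y i) j x)
          (fun i j => hMb s hs x hx i j)
      rw [MeasureTheory.integral_const_mul] at h3
      exact h3
    have h4 : -(g s) ≤ ∫ x in Set.Icc a b, Dv s x := by
      rw [hdiv s]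
      have e2 : g s = ∑ j : Fin 3, bdrySup a b (u s)
          * (faceIntegral a b j (b j) (fun x => ∑ i, Bb s x i * Bb s x i)
            + faceIntegral a b j (a j) (fun x => ∑ i, Bb s x i * Bb s x i)) := by
        show bdrySup a b (u s) * bdryIntegral a b (fun x _ => ∑ i, Bb s x i * Bb s x i) = _
        rw [hbdryI s, Finset.mul_sum]
      rw [e2, ← Finset.sum_neg_distrib]
      refine Finset.sum_le_sum fun j _ => ?_
      have hb := hface_b s hs j
      have ha := hface_a s hs j
      linarith
    linarith
  -- nonnegativity and continuity of the forcing term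
  have hg0 : ∀ s, 0 ≤ g s := by
    intro s
    refine mul_nonneg (hSb s).1 ?_
    rw [hbdryI s]
    refine Finset.sum_nonneg fun j _ => add_nonneg ?_ ?_ <;>
      exact setIntegral_nonneg measurableSet_Icc fun y _ => hQbnn s _
  have hgc : Continuous g := by
    refine (continuous_bdrySupComp a b hab' u hucont).mul ?_
    have hface : ∀ (j : Fin 3) (c : ℝ),
        Continuous fun s => faceIntegral a b j c (fun x => ∑ i, Bb s x i * Bb s x i) := by
      intro j c
      refine contParam ?_ isCompact_Icc
      refine continuous_finset_sum _ fun i _ => ?_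
      have : Continuous fun p : ℝ × (Fin 2 → ℝ) =>
          (p.1, Fin.insertNth (α := fun _ => ℝ) j c p.2) :=
        continuous_fst.prodMk ((hins j c).comp continuous_snd)
      exact ((hBbcont i).comp this).mul ((hBbcont i).comp this)
    have : Continuous fun s => ∑ j : Fin 3,
        (faceIntegral a b j (b j) (fun x => ∑ i, Bb s x i * Bb s x i)
          + faceIntegral a b j (a j) (fun x => ∑ i, Bb s x i * Bb s x i)) :=
      continuous_finset_sum _ fun j _ => (hface j (b j)).add (hface j (a j))
    exact this.congr fun s => (hbdryI s).symm
  -- Gronwall argument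
  intro t ht
  set ψ : ℝ → ℝ := fun s =>
    Real.exp (-(9 * M) * s) * (-(9 * M)) * E s + Real.exp (-(9 * M) * s) * E' s with hψdef
  have hφder : ∀ s, HasDerivAt (fun r => Real.exp (-(9 * M) * r) * E r) (ψ s) s := by
    intro s
    have h1 : HasDerivAt (fun r : ℝ => Real.exp (-(9 * M) * r))
        (Real.exp (-(9 * M) * s) * (-(9 * M))) s := by
      simpa using (((hasDerivAt_id s).const_mul (-(9 * M))).exp)
    have := h1.fun_mul (hEder s)
    simpa [hψdef] using this
  have hEc : Continuous E := continuous_iff_continuousAt.2 fun s => (hEder s).continuousAt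
  have hψc : Continuous ψ := by
    have hexp : Continuous fun s : ℝ => Real.exp (-(9 * M) * s) :=
      Real.continuous_exp.comp (continuous_const.mul continuous_id)
    exact ((hexp.mul continuous_const).mul hEc).add (hexp.mul hE'c)
  have hftc : (∫ s in (0:ℝ)..t, ψ s)
      = Real.exp (-(9 * M) * t) * E t - Real.exp (-(9 * M) * 0) * E 0 :=
    intervalIntegral.integral_eq_sub_of_hasDerivAt (fun s _ => hφder s)
      (hψc.intervalIntegrable 0 t)
  have hmono : (∫ s in (0:ℝ)..t, ψ s) ≤ ∫ s in (0:ℝ)..t, g s := by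
    refine intervalIntegral.integral_mono_on ht.1 (hψc.intervalIntegrable 0 t)
      (hgc.intervalIntegrable 0 t) ?_
    intro s hs
    have hsT : s ∈ Set.Icc (0:ℝ) T := ⟨hs.1, hs.2.trans ht.2⟩
    have hle := hE'le s hsT
    have hexp_pos : 0 < Real.exp (-(9 * M) * s) := Real.exp_pos _
    have hexp_le : Real.exp (-(9 * M) * s) ≤ 1 := by
      rw [Real.exp_le_one_iff]
      nlinarith [hs.1, hM0]
    have h5 : ψ s ≤ Real.exp (-(9 * M) * s) * g s := by
      have e3 : ψ s = Real.exp (-(9 * M) * s) * (-(9 * M)) * E s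
          + Real.exp (-(9 * M) * s) * E' s := rfl
      have h6 := mul_le_mul_of_nonneg_left hle hexp_pos.le
      rw [e3]
      nlinarith [h6]
    refine h5.trans ?_
    nlinarith [hg0 s, hexp_pos, hexp_le]
  have hkey : Real.exp (-(9 * M) * t) * E t ≤ E 0 + ∫ s in (0:ℝ)..t, g s := by
    rw [hftc] at hmono
    simp only [mul_zero, neg_zero, Real.exp_zero, one_mul] at hmono
    linarith
  have hE0 : E 0 = ∫ x in Set.Icc a b, ∑ i, B0 x i * B0 x i := by
    have e : E 0 = ∫ x in Set.Icc a b, Q 0 x := rfl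
    rw [e]
    refine integral_congr_ae (Filter.Eventually.of_forall fun x => ?_)
    exact Finset.sum_congr rfl fun i _ => by rw [hB0 x i]
  have hfin : E t ≤ Real.exp (9 * M * t) * (E 0 + ∫ s in (0:ℝ)..t, g s) := by
    have hpos : 0 < Real.exp (9 * M * t) := Real.exp_pos _
    have := mul_le_mul_of_nonneg_left hkey hpos.le
    calc E t = Real.exp (9 * M * t) * (Real.exp (-(9 * M) * t) * E t) := by
          rw [← mul_assoc, ← Real.exp_add]
          ring_nf
          simp
      _ ≤ Real.exp (9 * M * t) * (E 0 + ∫ s in (0:ℝ)..t, g s) := this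
  rw [hE0] at hfin
  exact hfin
end

section
/- In a three-dimensional SBP framework, let u = (u₁,u₂,u₃) be a fixed triple of grid functions and suppose there is K ≥ 0 such that for all j, ℓ ∈ {1,2,3} and all w ∈ ℝ^ι: ‖D_j(u_ℓ ∘ w) − u_ℓ ∘ (D_j w)‖_M ≤ K ‖w‖_M. Let B^b(t) be continuous boundary data, χ_{j,a} = 1 iff (E_j)_{aa} ≠ 0 and ν_{j,a} u_{j,a} < 0, and suppose B(t) solves the central-form semidiscretisation ∂_t B_i = D_j(u_i ∘ B_j) − u_i ∘ (D_j B_j) − D_j(u_j ∘ B_i) + M⁻¹ E_j ( χ_j ∘ u_j ∘ (B_i − B^b_i) ). Then for every t: d/dt ‖B(t)‖_M² ≤ 9 K ‖B(t)‖_M² + ‖u‖_∞ Σ_i B^b_i(t)ᵀ E B^b_i(t). (This is a representative instance of the proposition that semidiscretisations built from the central, split or product forms with a nonzero source term admit an energy estimate.) -/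
open Matrix

/-- The discrete norm `‖z‖_M = (zᵀ M z)^{1/2}`. -/
noncomputable def normM {ι : Type} [Fintype ι] (M : Matrix ι ι ℝ) (z : ι → ℝ) : ℝ :=
  Real.sqrt (z ⬝ᵥ M.mulVec z)

/-- `‖u‖_∞ = max_i ‖u_i‖_∞`. -/
noncomputable def normU {ι : Type} (u : Fin 3 → ι → ℝ) : ℝ :=
  ⨆ i : Fin 3, ⨆ a : ι, |u i a|

/-- `E = Σ_j |E_j|` (entrywise absolute values). -/
def Eabs {ι : Type} (E : Fin 3 → Matrix ι ι ℝ) : Matrix ι ι ℝ :=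
  Matrix.of fun a c => ∑ j, |(E j) a c|

section Aux

variable {ι : Type} [Fintype ι] [DecidableEq ι]

private lemma sign_mul_abs' (e : ℝ) : Real.sign e * |e| = e := by
  rcases lt_trichotomy e 0 with h|h|h
  · rw [Real.sign_of_neg h, abs_of_neg h]; ring
  · simp [h]
  · rw [Real.sign_of_pos h, abs_of_pos h]; ring

private lemma diag_mulVec {M : Matrix ι ι ℝ} (h : M.IsDiag) (x : ι → ℝ) (a : ι) :
    M.mulVec x a = M a a * x a := by
  unfold Matrix.mulVec dotProduct
  rw [Finset.sum_eq_single a]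
  · intro c _ hc; rw [show (fun j => M a j) c = M a c from rfl, h (Ne.symm hc), zero_mul]
  · intro ha; exact absurd (Finset.mem_univ a) ha

private lemma dot_diag {M : Matrix ι ι ℝ} (h : M.IsDiag) (x y : ι → ℝ) :
    x ⬝ᵥ M.mulVec y = ∑ a, M a a * (x a * y a) := by
  unfold dotProduct
  exact Finset.sum_congr rfl fun a _ => by rw [diag_mulVec h]; ring

private lemma normM_sq {M : Matrix ι ι ℝ} (h : M.IsDiag) (hd : ∀ a, 0 ≤ M a a) (x : ι → ℝ) :
    normM M x ^ 2 = ∑ a, M a a * (x a * x a) := by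
  rw [normM, Real.sq_sqrt, dot_diag h]
  rw [dot_diag h]
  exact Finset.sum_nonneg fun a _ => mul_nonneg (hd a) (mul_self_nonneg _)

private lemma normM_nonneg' (M : Matrix ι ι ℝ) (x : ι → ℝ) : 0 ≤ normM M x :=
  Real.sqrt_nonneg _

private lemma cs_bound {M : Matrix ι ι ℝ} (h : M.IsDiag) (hd : ∀ a, 0 ≤ M a a) (x y : ι → ℝ) :
    |x ⬝ᵥ M.mulVec y| ≤ normM M x * normM M y := by
  have hfg : ∀ z w : ι → ℝ, ∀ a, M a a * (z a * w a)
      = (Real.sqrt (M a a) * z a) * (Real.sqrt (M a a) * w a) := by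
    intro z w a
    rw [show (Real.sqrt (M a a) * z a) * (Real.sqrt (M a a) * w a)
      = (Real.sqrt (M a a) * Real.sqrt (M a a)) * (z a * w a) by ring,
      Real.mul_self_sqrt (hd a)]
  have hx : normM M x = Real.sqrt (∑ a, (Real.sqrt (M a a) * x a) ^ 2) := by
    rw [normM, dot_diag h]
    congr 1
    exact Finset.sum_congr rfl fun a _ => by rw [hfg x x a]; ring
  have hy : normM M y = Real.sqrt (∑ a, (Real.sqrt (M a a) * y a) ^ 2) := by
    rw [normM, dot_diag h]
    congr 1
    exact Finset.sum_congr rfl fun a _ => by rw [hfg y y a]; ring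
  rw [dot_diag h, hx, hy]
  rw [show (∑ a, M a a * (x a * y a))
    = ∑ a, (Real.sqrt (M a a) * x a) * (Real.sqrt (M a a) * y a) from
      Finset.sum_congr rfl fun a _ => hfg x y a]
  rw [← Real.sqrt_mul (Finset.sum_nonneg fun a _ => sq_nonneg _), ← Real.sqrt_sq_eq_abs]
  exact Real.sqrt_le_sqrt (Finset.sum_mul_sq_le_sq_mul_sq _ _ _)

private lemma sbp_identity {M Dj Ej : Matrix ι ι ℝ} (hMdiag : M.IsDiag)
    (hSBPj : M * Dj + Djᵀ * M = Ej) (Bv uv : ι → ℝ) :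
    Bv ⬝ᵥ M.mulVec (Dj.mulVec (fun c => uv c * Bv c))
      + Bv ⬝ᵥ M.mulVec (fun c => uv c * Dj.mulVec Bv c)
      = Bv ⬝ᵥ Ej.mulVec (fun c => uv c * Bv c) := by
  have h2 : Bv ⬝ᵥ M.mulVec (fun c => uv c * Dj.mulVec Bv c)
      = (Dj.mulVec Bv) ⬝ᵥ M.mulVec (fun c => uv c * Bv c) := by
    rw [dot_diag hMdiag, dot_diag hMdiag]
    exact Finset.sum_congr rfl fun a _ => by ring
  have h3 : (Dj.mulVec Bv) ⬝ᵥ M.mulVec (fun c => uv c * Bv c)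
      = Bv ⬝ᵥ (Djᵀ * M).mulVec (fun c => uv c * Bv c) := by
    rw [← Matrix.mulVec_mulVec, Matrix.dotProduct_mulVec Bv Djᵀ, Matrix.vecMul_transpose,
      Matrix.dotProduct_mulVec]
  rw [h2, h3, Matrix.mulVec_mulVec, ← dotProduct_add, ← Matrix.add_mulVec, hSBPj]

private lemma bdry_pointwise (e uv U Bv Bbv χv : ℝ) (hU : |uv| ≤ U)
    (hχ : χv = if e ≠ 0 ∧ Real.sign e * uv < 0 then 1 else 0) :
    e * (2 * (Bv * (χv * uv * (Bv - Bbv))) - Bv * (uv * Bv)) ≤ |e| * (U * Bbv ^ 2) := by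
  have hU0 : 0 ≤ U := (abs_nonneg uv).trans hU
  by_cases hc : e ≠ 0 ∧ Real.sign e * uv < 0
  · have heu : e * uv < 0 := by
      have h1 : e * uv = |e| * (Real.sign e * uv) := by
        rw [show |e| * (Real.sign e * uv) = (Real.sign e * |e|) * uv by ring, sign_mul_abs' e]
      rw [h1]
      exact mul_neg_of_pos_of_neg (abs_pos.mpr hc.1) hc.2
    have hχ1 : χv = 1 := by rw [hχ, if_pos hc]
    subst hχ1
    have h2 : -(e * uv) ≤ |e| * U := by
      calc -(e * uv) ≤ |e * uv| := neg_le_abs _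
        _ = |e| * |uv| := abs_mul e uv
        _ ≤ |e| * U := mul_le_mul_of_nonneg_left hU (abs_nonneg e)
    nlinarith [mul_nonpos_of_nonpos_of_nonneg heu.le (sq_nonneg (Bv - Bbv)),
      mul_le_mul_of_nonneg_right h2 (sq_nonneg Bbv)]
  · have hχ0 : χv = 0 := by rw [hχ, if_neg hc]
    subst hχ0
    have heu : 0 ≤ e * uv := by
      by_cases he : e = 0
      · simp [he]
      · push_neg at hc
        have hs := hc he
        have h1 : e * uv = |e| * (Real.sign e * uv) := by
          rw [show |e| * (Real.sign e * uv) = (Real.sign e * |e|) * uv by ring, sign_mul_abs' e]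
        rw [h1]
        exact mul_nonneg (abs_nonneg e) hs
    nlinarith [mul_nonneg heu (sq_nonneg Bv),
      mul_nonneg (abs_nonneg e) (mul_nonneg hU0 (sq_nonneg Bbv))]

end Aux

/-- Energy rate estimate for the central-form SBP semidiscretisation (with source term)
of the linear induction equation with weakly imposed inflow boundary conditions:
under a commutator bound `‖D_j(u_ℓ∘w) − u_ℓ∘(D_j w)‖_M ≤ K‖w‖_M`,
`d/dt ‖B‖_M² ≤ 9K ‖B‖_M² + ‖u‖_∞ Σ_i (B^b_i)ᵀ E B^b_i`. -/
theorem semidiscrete_energy_estimate_central_form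
    {ι : Type} [Fintype ι] [DecidableEq ι] [Nonempty ι]
    (M : Matrix ι ι ℝ) (hMdiag : M.IsDiag) (hMpos : M.PosDef)
    (D E : Fin 3 → Matrix ι ι ℝ)
    (hEdiag : ∀ j, (E j).IsDiag)
    (hSBP : ∀ j, M * D j + (D j)ᵀ * M = E j)
    (u : Fin 3 → ι → ℝ) (K : ℝ) (hK : 0 ≤ K)
    (hcomm : ∀ (j ℓ : Fin 3) (w : ι → ℝ),
      normM M ((D j).mulVec (fun c => u ℓ c * w c) - fun c => u ℓ c * (D j).mulVec w c)
        ≤ K * normM M w)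
    (Bb B : ℝ → Fin 3 → ι → ℝ)
    (hBb : ∀ i a, Continuous fun t => Bb t i a)
    (hB : ∀ i a, Differentiable ℝ fun t => B t i a)
    (χ : Fin 3 → ι → ℝ)
    (hχ : ∀ j a, χ j a
      = if (E j) a a ≠ 0 ∧ Real.sign ((E j) a a) * u j a < 0 then 1 else 0)
    (hode : ∀ t, ∀ i, ∀ a, deriv (fun s => B s i a) t
      = ∑ j, ((D j).mulVec (fun c => u i c * B t j c) a
          - u i a * (D j).mulVec (B t j) a
          - (D j).mulVec (fun c => u j c * B t i c) a
          + (M⁻¹ * E j).mulVec (fun c => χ j c * u j c * (B t i c - Bb t i c)) a)) :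
    ∀ t, deriv (fun s => ∑ i, B s i ⬝ᵥ M.mulVec (B s i)) t
      ≤ 9 * K * (∑ i, B t i ⬝ᵥ M.mulVec (B t i))
        + normU u * (∑ i, Bb t i ⬝ᵥ (Eabs E).mulVec (Bb t i)) := by
  intro t
  -- diagonal entries of M are positive
  have hdpos : ∀ a, 0 < M a a := by
    intro a
    have hx : (Pi.single a 1 : ι → ℝ) ≠ 0 := by
      intro h
      have := congrFun h a
      simp at this
    have h2 := hMpos.dotProduct_mulVec_pos hx
    have h3 : star (Pi.single a 1 : ι → ℝ) ⬝ᵥ M.mulVec (Pi.single a 1) = M a a := by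
      rw [show star (Pi.single a 1 : ι → ℝ) = Pi.single a 1 from rfl, dot_diag hMdiag]
      simp [Pi.single_apply]
    rwa [h3] at h2
  have hdnn : ∀ a, 0 ≤ M a a := fun a => (hdpos a).le
  set U := normU u with hUdef
  have hUb : ∀ j a, |u j a| ≤ U := by
    intro j a
    calc |u j a| ≤ ⨆ b, |u j b| :=
          le_ciSup (f := fun b => |u j b|) (Set.Finite.bddAbove (Set.finite_range _)) a
      _ ≤ U := le_ciSup (f := fun i : Fin 3 => ⨆ b, |u i b|)
          (Set.Finite.bddAbove (Set.finite_range _)) j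
  set n : Fin 3 → ℝ := fun i => normM M (B t i) with hn
  set r : Fin 3 → Fin 3 → ι → ℝ := fun i j a =>
    (D j).mulVec (fun c => u i c * B t j c) a - u i a * (D j).mulVec (B t j) a
      - (D j).mulVec (fun c => u j c * B t i c) a
      + (M⁻¹ * E j).mulVec (fun c => χ j c * u j c * (B t i c - Bb t i c)) a with hrdef
  have hB' : ∀ (i : Fin 3) (a : ι), HasDerivAt (fun s => B s i a)
      (deriv (fun s => B s i a) t) t := fun i a => ((hB i a) t).hasDerivAt
  -- the derivative of the energy
  have hder : deriv (fun s => ∑ i, B s i ⬝ᵥ M.mulVec (B s i)) t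
      = ∑ i, ∑ a, M a a * (deriv (fun s => B s i a) t * B t i a
          + B t i a * deriv (fun s => B s i a) t) := by
    refine HasDerivAt.deriv (HasDerivAt.fun_sum fun i _ => ?_)
    have h1 : (fun s => B s i ⬝ᵥ M.mulVec (B s i))
        = fun s => ∑ a, M a a * (B s i a * B s i a) :=
      funext fun s => dot_diag hMdiag _ _
    rw [h1]
    exact HasDerivAt.fun_sum fun a _ => ((hB' i a).mul (hB' i a)).const_mul (M a a)
  rw [hder]
  -- rewrite via the ODE
  have hstep : ∀ i : Fin 3,
      (∑ a, M a a * (deriv (fun s => B s i a) t * B t i a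
        + B t i a * deriv (fun s => B s i a) t))
      = ∑ j, 2 * (B t i ⬝ᵥ M.mulVec (r i j)) := by
    intro i
    have hode' : ∀ a, deriv (fun s => B s i a) t = ∑ j, r i j a := fun a => hode t i a
    calc (∑ a, M a a * (deriv (fun s => B s i a) t * B t i a
            + B t i a * deriv (fun s => B s i a) t))
        = ∑ a, ∑ j, 2 * (M a a * (B t i a * r i j a)) := by
          refine Finset.sum_congr rfl fun a _ => ?_
          rw [hode' a]
          calc M a a * ((∑ j, r i j a) * B t i a + B t i a * ∑ j, r i j a)
              = (2 * (M a a * B t i a)) * ∑ j, r i j a := by ring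
            _ = ∑ j, (2 * (M a a * B t i a)) * r i j a := Finset.mul_sum _ _ _
            _ = ∑ j, 2 * (M a a * (B t i a * r i j a)) :=
                Finset.sum_congr rfl fun j _ => by ring
      _ = ∑ j, ∑ a, 2 * (M a a * (B t i a * r i j a)) := Finset.sum_comm
      _ = ∑ j, 2 * (B t i ⬝ᵥ M.mulVec (r i j)) := by
          refine Finset.sum_congr rfl fun j _ => ?_
          rw [dot_diag hMdiag, Finset.mul_sum]
  -- the per-(i,j) bound
  have hbound : ∀ i j : Fin 3, 2 * (B t i ⬝ᵥ M.mulVec (r i j))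
      ≤ 2 * K * (n i * n j) + K * n i ^ 2
        + U * ∑ a, |E j a a| * (Bb t i a * Bb t i a) := by
    intro i j
    set w1 : ι → ℝ := (D j).mulVec (fun c => u i c * B t j c)
      - fun c => u i c * (D j).mulVec (B t j) c with hw1def
    set v : ι → ℝ := fun c => u j c * B t i c with hvdef
    set w2 : ι → ℝ := (D j).mulVec v - fun c => u j c * (D j).mulVec (B t i) c with hw2def
    set g : ι → ℝ := fun c => χ j c * u j c * (B t i c - Bb t i c) with hgdef
    have hsplit : B t i ⬝ᵥ M.mulVec (r i j)
        = B t i ⬝ᵥ M.mulVec w1 - B t i ⬝ᵥ M.mulVec ((D j).mulVec v)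
          + B t i ⬝ᵥ M.mulVec ((M⁻¹ * E j).mulVec g) := by
      simp only [dot_diag hMdiag]
      rw [← Finset.sum_sub_distrib, ← Finset.sum_add_distrib]
      refine Finset.sum_congr rfl fun a _ => ?_
      simp only [hrdef, hw1def, hvdef, hgdef, Pi.sub_apply]
      ring
    have h1 : 2 * (B t i ⬝ᵥ M.mulVec w1) ≤ 2 * K * (n i * n j) := by
      have hcs := cs_bound hMdiag hdnn (B t i) w1
      have hcm : normM M w1 ≤ K * normM M (B t j) := hcomm j i (B t j)
      have hni : (0:ℝ) ≤ n i := normM_nonneg' M (B t i)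
      calc 2 * (B t i ⬝ᵥ M.mulVec w1) ≤ 2 * |B t i ⬝ᵥ M.mulVec w1| := by
            have := le_abs_self (B t i ⬝ᵥ M.mulVec w1); linarith
        _ ≤ 2 * (n i * normM M w1) := by linarith
        _ ≤ 2 * (n i * (K * n j)) := by
            have := mul_le_mul_of_nonneg_left hcm hni; linarith
        _ = 2 * K * (n i * n j) := by ring
    have hid := sbp_identity hMdiag (hSBP j) (B t i) (u j)
    have hw2 : B t i ⬝ᵥ M.mulVec w2
        = B t i ⬝ᵥ M.mulVec ((D j).mulVec v)
          - B t i ⬝ᵥ M.mulVec (fun c => u j c * (D j).mulVec (B t i) c) := by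
      simp only [dot_diag hMdiag]
      rw [← Finset.sum_sub_distrib]
      refine Finset.sum_congr rfl fun a _ => ?_
      simp only [hw2def, Pi.sub_apply]
      ring
    have h2 : -(2 * (B t i ⬝ᵥ M.mulVec ((D j).mulVec v)))
        = -(B t i ⬝ᵥ (E j).mulVec v) - (B t i ⬝ᵥ M.mulVec w2) := by
      linarith [hid, hw2]
    have h2b : -(B t i ⬝ᵥ M.mulVec w2) ≤ K * n i ^ 2 := by
      have hcs := cs_bound hMdiag hdnn (B t i) w2
      have hcm : normM M w2 ≤ K * normM M (B t i) := hcomm j j (B t i)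
      calc -(B t i ⬝ᵥ M.mulVec w2) ≤ |B t i ⬝ᵥ M.mulVec w2| := neg_le_abs _
        _ ≤ n i * normM M w2 := hcs
        _ ≤ n i * (K * n i) :=
            mul_le_mul_of_nonneg_left hcm (normM_nonneg' M (B t i))
        _ = K * n i ^ 2 := by ring
    have h4 : B t i ⬝ᵥ M.mulVec ((M⁻¹ * E j).mulVec g) = B t i ⬝ᵥ (E j).mulVec g := by
      rw [Matrix.mulVec_mulVec,
        Matrix.mul_nonsing_inv_cancel_left (A := M) (E j) hMpos.det_pos.ne'.isUnit]
    have hbd : -(B t i ⬝ᵥ (E j).mulVec v) + 2 * (B t i ⬝ᵥ (E j).mulVec g)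
        ≤ U * ∑ a, |E j a a| * (Bb t i a * Bb t i a) := by
      have hlhs : -(B t i ⬝ᵥ (E j).mulVec v) + 2 * (B t i ⬝ᵥ (E j).mulVec g)
          = ∑ a, E j a a * (2 * (B t i a * g a) - B t i a * v a) := by
        rw [dot_diag (hEdiag j), dot_diag (hEdiag j), Finset.mul_sum,
          neg_add_eq_sub, ← Finset.sum_sub_distrib]
        refine Finset.sum_congr rfl fun a _ => ?_
        ring
      rw [hlhs, Finset.mul_sum]
      refine Finset.sum_le_sum fun a _ => ?_
      have hp := bdry_pointwise (E j a a) (u j a) U (B t i a) (Bb t i a) (χ j a)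
        (hUb j a) (hχ j a)
      calc E j a a * (2 * (B t i a * g a) - B t i a * v a)
          = E j a a * (2 * (B t i a * (χ j a * u j a * (B t i a - Bb t i a)))
              - B t i a * (u j a * B t i a)) := by rw [hgdef, hvdef]
        _ ≤ |E j a a| * (U * Bb t i a ^ 2) := hp
        _ = U * (|E j a a| * (Bb t i a * Bb t i a)) := by ring
    calc 2 * (B t i ⬝ᵥ M.mulVec (r i j))
        = 2 * (B t i ⬝ᵥ M.mulVec w1)
          + (-(2 * (B t i ⬝ᵥ M.mulVec ((D j).mulVec v))))
          + 2 * (B t i ⬝ᵥ M.mulVec ((M⁻¹ * E j).mulVec g)) := by rw [hsplit]; ring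
      _ = 2 * (B t i ⬝ᵥ M.mulVec w1)
          + (-(B t i ⬝ᵥ (E j).mulVec v) - (B t i ⬝ᵥ M.mulVec w2))
          + 2 * (B t i ⬝ᵥ (E j).mulVec g) := by rw [h2, h4]
      _ ≤ 2 * K * (n i * n j) + K * n i ^ 2
          + U * ∑ a, |E j a a| * (Bb t i a * Bb t i a) := by linarith [h1, h2b, hbd]
  -- assemble
  have hEabsdiag : (Eabs E).IsDiag := by
    intro a c hac
    simp only [Eabs, Matrix.of_apply]
    exact Finset.sum_eq_zero fun j _ => by rw [hEdiag j hac, abs_zero]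
  have hSi : ∀ i : Fin 3, (∑ j, ∑ a, |E j a a| * (Bb t i a * Bb t i a))
      = Bb t i ⬝ᵥ (Eabs E).mulVec (Bb t i) := by
    intro i
    rw [dot_diag hEabsdiag, Finset.sum_comm]
    refine Finset.sum_congr rfl fun a _ => ?_
    rw [show (Eabs E) a a = ∑ j, |E j a a| from rfl, Finset.sum_mul]
  have hBM : ∀ i : Fin 3, B t i ⬝ᵥ M.mulVec (B t i) = n i ^ 2 := by
    intro i
    rw [hn, normM_sq hMdiag hdnn, dot_diag hMdiag]
  calc (∑ i, ∑ a, M a a * (deriv (fun s => B s i a) t * B t i a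
          + B t i a * deriv (fun s => B s i a) t))
      = ∑ i, ∑ j, 2 * (B t i ⬝ᵥ M.mulVec (r i j)) :=
        Finset.sum_congr rfl fun i _ => hstep i
    _ ≤ ∑ i, ∑ j, (2 * K * (n i * n j) + K * n i ^ 2
          + U * ∑ a, |E j a a| * (Bb t i a * Bb t i a)) :=
        Finset.sum_le_sum fun i _ => Finset.sum_le_sum fun j _ => hbound i j
    _ ≤ ∑ i, ∑ j, ((K * (n i ^ 2 + n j ^ 2) + K * n i ^ 2)
          + U * ∑ a, |E j a a| * (Bb t i a * Bb t i a)) := by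
        refine Finset.sum_le_sum fun i _ => Finset.sum_le_sum fun j _ => ?_
        have h2ab : 2 * (n i * n j) ≤ n i ^ 2 + n j ^ 2 := by nlinarith [sq_nonneg (n i - n j)]
        have := mul_le_mul_of_nonneg_left h2ab hK
        linarith
    _ = (∑ i, ∑ j, (K * (n i ^ 2 + n j ^ 2) + K * n i ^ 2))
          + U * ∑ i, Bb t i ⬝ᵥ (Eabs E).mulVec (Bb t i) := by
        rw [Finset.mul_sum, ← Finset.sum_add_distrib]
        refine Finset.sum_congr rfl fun i _ => ?_
        rw [Finset.sum_add_distrib, ← hSi i, Finset.mul_sum]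
    _ = 9 * K * (∑ i, B t i ⬝ᵥ M.mulVec (B t i))
          + U * ∑ i, Bb t i ⬝ᵥ (Eabs E).mulVec (Bb t i) := by
        have h9 : (∑ i, ∑ j, (K * (n i ^ 2 + n j ^ 2) + K * n i ^ 2))
            = 9 * K * (∑ i : Fin 3, n i ^ 2) := by
          simp [Fin.sum_univ_three]; ring
        rw [h9]
        congr 1
        rw [show (∑ i, B t i ⬝ᵥ M.mulVec (B t i)) = ∑ i : Fin 3, n i ^ 2 from
          Finset.sum_congr rfl fun i _ => hBM i]
end
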